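/- Suppose |F(z,w)| ≤ A·min(|z-w|^β, 1) for some A > 0 and β > α, with α ∈ (0,2), γ ∈ [0, min(α,d)). Then there exists C = C(β, d, α, γ) > 0 such that for every Borel D ⊂ ℝ^d, every t ∈ (0, ∞) and every y ∈ D, ∫_0^t ∫_{ℝ^d × ℝ^d} q(s,y,w)·(1 + (|z-w| ∧ t^{1/α})/|y-w|)^γ · (|F(z,w)| + |F(w,z)|)/|z-w|^{d+α} dz dw ds ≤ C·A·t, where q(s,y,w) = min(s^{-d/α}, s/|y-w|^{d+α}). -/

import Mathlib

/-!
Bound the integrand pointwise: `|F(z,w)| + |F(w,z)| ≤ 2A min(|z-w|^β, 1)` and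
`(1 + min(|z-w|, t^{1/α}) / |y-w|)^γ ≤ 2^γ (1 + t^{γ/α} |y-w|^{-γ})`. The `z`-integral then
produces the constant `∫ min(|u|^β, 1) |u|^{-d-α} du`, finite because `β > α`. The substitution
`u = s^{1/α} v` turns the `w`-integral of `q(s,y,w) (1 + t^{γ/α} |y-w|^{-γ})` into
`J₀ + (t/s)^{γ/α} J_γ`, where `J_γ = ∫ min(1, |v|^{-d-α}) |v|^{-γ} dv` is finite because `γ < d`.
Finally `γ < α` makes `(t/s)^{γ/α}` integrable on `(0,t)`, with integral `t / (1 - γ/α)`.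
-/

open Real MeasureTheory Set Module

theorem integrableOn_Ioi_pow_mul_of_le_min_rpow {g : ℝ → ℝ} (hg : Measurable g) {n : ℕ}
    {a b : ℝ} (ha : a < n + 1) (hb : n + 1 < b)
    (hgab : ∀ r, 0 < r → |g r| ≤ min (r ^ (-a)) (r ^ (-b))) :
    IntegrableOn (fun r => r ^ n * g r) (Ioi 0) := by
  have hmeas : AEStronglyMeasurable (fun r : ℝ => r ^ n * g r) := by fun_prop
  have bound : ∀ c r, 0 < r → |g r| ≤ r ^ (-c) → ‖r ^ n * g r‖ ≤ r ^ ((n : ℝ) - c) := by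
    intro c r hr hgr
    rw [norm_mul, norm_pow, norm_of_nonneg hr.le, Real.norm_eq_abs, sub_eq_add_neg,
      rpow_add hr, rpow_natCast]
    gcongr
  rw [← Ioc_union_Ioi_eq_Ioi zero_le_one]
  refine IntegrableOn.union ?_ ?_
  · refine Integrable.mono' (g := fun r => r ^ ((n : ℝ) - a)) ?_ hmeas.restrict ?_
    · exact (intervalIntegrable_iff_integrableOn_Ioc_of_le zero_le_one).mp
        (intervalIntegral.intervalIntegrable_rpow' (by linarith))
    · filter_upwards [ae_restrict_mem measurableSet_Ioc] with r hr
      exact bound a r hr.1 ((hgab r hr.1).trans (min_le_left _ _))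
  · refine Integrable.mono' (g := fun r => r ^ ((n : ℝ) - b))
      (integrableOn_Ioi_rpow_of_lt (by linarith) one_pos) hmeas.restrict ?_
    filter_upwards [ae_restrict_mem measurableSet_Ioi] with r hr
    have hr0 : 0 < r := one_pos.trans hr
    exact bound b r hr0 ((hgab r hr0).trans (min_le_right _ _))

theorem integrableOn_Ioo_const_add_mul_rpow_neg {θ t : ℝ} (hθ : θ < 1) (ht : 0 < t) (a b : ℝ) :
    IntegrableOn (fun s => a + b * s ^ (-θ)) (Ioo 0 t) :=
  (integrableOn_const measure_Ioo_lt_top.ne).add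
    (((intervalIntegral.integrableOn_Ioo_rpow_iff ht).2 (by linarith)).const_mul b)

theorem integral_Ioo_const_add_mul_rpow_neg {θ t : ℝ} (hθ : θ < 1) (ht : 0 < t) (a b : ℝ) :
    ∫ s in Ioo 0 t, (a + b * t ^ θ * s ^ (-θ)) = (a + b / (1 - θ)) * t := by
  have hrpow : IntegrableOn (fun s : ℝ => s ^ (-θ)) (Ioo 0 t) :=
    (intervalIntegral.integrableOn_Ioo_rpow_iff ht).2 (by linarith)
  have hconst : IntegrableOn (fun _ : ℝ => a) (Ioo 0 t) :=
    integrableOn_const measure_Ioo_lt_top.ne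
  rw [integral_add hconst (hrpow.const_mul _), setIntegral_const, integral_const_mul,
    ← integral_Ioc_eq_integral_Ioo, ← intervalIntegral.integral_of_le ht.le,
    integral_rpow (Or.inl (by linarith)), Real.volume_real_Ioo_of_le ht.le]
  have htθ : t ^ θ ≠ 0 := (rpow_pos_of_pos ht θ).ne'
  have hθ₁ : -θ + 1 ≠ 0 := by linarith
  have hθ₂ : 1 - θ ≠ 0 := by linarith
  rw [zero_rpow hθ₁, sub_zero, sub_zero, smul_eq_mul, rpow_add ht, rpow_neg ht.le, rpow_one]
  field_simp
  ring

theorem one_add_rpow_le_two_rpow_mul {x γ : ℝ} (hx : 0 ≤ x) (hγ : 0 ≤ γ) :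
    (1 + x) ^ γ ≤ 2 ^ γ * (1 + x ^ γ) :=
  calc (1 + x) ^ γ ≤ (2 * max 1 x) ^ γ := by
        gcongr; linarith [le_max_left 1 x, le_max_right 1 x]
    _ = 2 ^ γ * max 1 (x ^ γ) := by
        rw [mul_rpow zero_le_two (hx.trans (le_max_right 1 x)), rpow_max zero_le_one hx hγ,
          one_rpow]
    _ ≤ 2 ^ γ * (1 + x ^ γ) := by
        gcongr; exact max_le_add_of_nonneg zero_le_one (rpow_nonneg hx γ)

theorem one_add_div_rpow_le {a T r γ : ℝ} (ha : 0 ≤ a) (haT : a ≤ T) (hr : 0 ≤ r)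
    (hγ : 0 ≤ γ) : (1 + a / r) ^ γ ≤ 2 ^ γ * (1 + T ^ γ * r ^ (-γ)) :=
  calc (1 + a / r) ^ γ ≤ (1 + T / r) ^ γ := by gcongr
    _ ≤ 2 ^ γ * (1 + (T / r) ^ γ) :=
        one_add_rpow_le_two_rpow_mul (div_nonneg (ha.trans haT) hr) hγ
    _ = 2 ^ γ * (1 + T ^ γ * r ^ (-γ)) := by
        rw [div_rpow (ha.trans haT) hr, rpow_neg hr, div_eq_mul_inv]

noncomputable section

local notation "dim" => Module.finrank ℝ

variable {E : Type*} [NormedAddCommGroup E] [NormedSpace ℝ E] {α β γ : ℝ}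

def jumpKernelBound (α β : ℝ) (u : E) : ℝ :=
  min (‖u‖ ^ β) 1 / ‖u‖ ^ ((dim E : ℝ) + α)

/-- The paper's `q(s, y, w)` is `heatKernelBound α s (w - y)`. -/
def heatKernelBound (α s : ℝ) (u : E) : ℝ :=
  min (s ^ (-(dim E : ℝ) / α)) (s / ‖u‖ ^ ((dim E : ℝ) + α))

theorem heatKernelBound_rpow_smul (hα : 0 < α) {s : ℝ} (hs : 0 < s) (v : E) :
    heatKernelBound α s (s ^ (1 / α) • v) = s ^ (-(dim E : ℝ) / α) * heatKernelBound α 1 v := by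
  have hscale : s / s ^ (1 / α * ((dim E : ℝ) + α)) = s ^ (-(dim E : ℝ) / α) := by
    nth_rw 1 [← rpow_one s]
    rw [← rpow_sub hs]
    congr 1
    field_simp
    ring
  simp only [heatKernelBound, norm_smul, norm_of_nonneg (rpow_nonneg hs.le _),
    mul_rpow (rpow_nonneg hs.le _) (norm_nonneg v), ← rpow_mul hs.le, one_rpow,
    div_mul_eq_div_div, hscale, mul_min_of_nonneg _ _ (rpow_nonneg hs.le _), mul_one, mul_one_div]

theorem heatKernelBound_mul_rpow_eq (hα : 0 < α) {s : ℝ} (hs : 0 < s) (u : E) :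
    heatKernelBound α s u * ‖u‖ ^ (-γ) = s ^ (-((dim E : ℝ) + γ) / α) *
      (heatKernelBound α 1 ((s ^ (1 / α))⁻¹ • u) * ‖(s ^ (1 / α))⁻¹ • u‖ ^ (-γ)) := by
  have hc : 0 < s ^ (1 / α) := rpow_pos_of_pos hs _
  have h := heatKernelBound_rpow_smul hα hs ((s ^ (1 / α))⁻¹ • u)
  rw [smul_inv_smul₀ hc.ne'] at h
  rw [h, norm_smul, norm_inv, norm_of_nonneg hc.le,
    mul_rpow (inv_nonneg.2 hc.le) (norm_nonneg u), inv_rpow hc.le, ← rpow_neg hc.le, neg_neg,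
    ← rpow_mul hs.le]
  have hexp : s ^ (-((dim E : ℝ) + γ) / α) * s ^ (1 / α * γ) = s ^ (-(dim E : ℝ) / α) := by
    rw [← rpow_add hs]
    ring_nf
  rw [← hexp]
  ring

theorem integrand_le_heatKernelBound_mul_jumpKernelBound {A : ℝ} {F : E → E → ℝ}
    (hF : ∀ z w, |F z w| ≤ A * min (dist z w ^ β) 1) (hγ : 0 ≤ γ) {s T : ℝ} (hs : 0 ≤ s)
    (hT : 0 ≤ T) (y w z : E) :
    min (s ^ (-(dim E : ℝ) / α)) (s / dist y w ^ ((dim E : ℝ) + α)) *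
        (1 + min (dist z w) T / dist y w) ^ γ *
        ((|F z w| + |F w z|) / dist z w ^ ((dim E : ℝ) + α)) ≤
      2 ^ γ * (2 * A) * ((heatKernelBound α s (w - y) +
        T ^ γ * (heatKernelBound α s (w - y) * ‖w - y‖ ^ (-γ))) *
          jumpKernelBound α β (z - w)) := by
  rw [dist_comm y w, dist_eq_norm w y]
  have hprofile :
      (1 + min (dist z w) T / ‖w - y‖) ^ γ ≤ 2 ^ γ * (1 + T ^ γ * ‖w - y‖ ^ (-γ)) :=
    one_add_div_rpow_le (le_min dist_nonneg hT) (min_le_right _ _) (norm_nonneg _) hγ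
  have hjump : (|F z w| + |F w z|) / dist z w ^ ((dim E : ℝ) + α) ≤
      2 * A * jumpKernelBound α β (z - w) := by
    rw [jumpKernelBound, ← dist_eq_norm, mul_div_assoc']
    gcongr
    linarith [hF z w, dist_comm w z ▸ hF w z]
  calc _ ≤ heatKernelBound α s (w - y) * (2 ^ γ * (1 + T ^ γ * ‖w - y‖ ^ (-γ))) *
        (2 * A * jumpKernelBound α β (z - w)) := by
        rw [heatKernelBound]
        gcongr
    _ = _ := by ring

section Haar

variable [FiniteDimensional ℝ E] [MeasurableSpace E] [BorelSpace E] (μ : Measure E)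
  [μ.IsAddHaarMeasure]

theorem integrable_comp_norm_of_le_min_rpow [Nontrivial E] {g : ℝ → ℝ} (hg : Measurable g)
    {a b : ℝ} (ha : a < dim E) (hb : dim E < b)
    (hgab : ∀ r, 0 < r → |g r| ≤ min (r ^ (-a)) (r ^ (-b))) :
    Integrable (fun x : E => g ‖x‖) μ := by
  have hdim : ((dim E - 1 : ℕ) : ℝ) + 1 = dim E := by
    rw [Nat.cast_sub finrank_pos, Nat.cast_one, sub_add_cancel]
  refine (integrable_fun_norm_addHaar μ (f := g)).2 ?_
  simpa only [smul_eq_mul] using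
    integrableOn_Ioi_pow_mul_of_le_min_rpow hg (hdim ▸ ha) (hdim ▸ hb) hgab

theorem integrable_jumpKernelBound [Nontrivial E] (hα : 0 < α) (hβ : α < β) :
    Integrable (jumpKernelBound (E := E) α β) μ := by
  refine integrable_comp_norm_of_le_min_rpow μ
    (g := fun r => min (r ^ β) 1 / r ^ ((dim E : ℝ) + α)) (by fun_prop)
    (a := dim E + α - β) (b := dim E + α) (by linarith) (by linarith) fun r hr => ?_
  rw [abs_of_nonneg (by positivity)]
  refine le_min ?_ ?_
  · calc min (r ^ β) 1 / r ^ ((dim E : ℝ) + α) ≤ r ^ β / r ^ ((dim E : ℝ) + α) := by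
          gcongr; exact min_le_left _ _
      _ = r ^ (-(dim E + α - β)) := by rw [← rpow_sub hr]; ring_nf
  · calc min (r ^ β) 1 / r ^ ((dim E : ℝ) + α) ≤ 1 / r ^ ((dim E : ℝ) + α) := by
          gcongr; exact min_le_right _ _
      _ = r ^ (-((dim E : ℝ) + α)) := by rw [rpow_neg hr.le, one_div]

theorem integrable_heatKernelBound_one_mul_rpow [Nontrivial E] (hγα : -α < γ)
    (hγ : γ < dim E) : Integrable (fun v : E => heatKernelBound α 1 v * ‖v‖ ^ (-γ)) μ := by
  refine integrable_comp_norm_of_le_min_rpow μ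
    (g := fun r => min (1 ^ (-(dim E : ℝ) / α)) (1 / r ^ ((dim E : ℝ) + α)) * r ^ (-γ))
    (by fun_prop) (a := γ) (b := dim E + α + γ) hγ (by linarith) fun r hr => ?_
  rw [abs_of_nonneg (by positivity), one_rpow, min_mul_of_nonneg _ _ (by positivity), one_mul,
    one_div, ← rpow_neg hr.le, ← rpow_add hr]
  ring_nf
  rfl

theorem integrable_heatKernelBound_mul_rpow [Nontrivial E] (hα : 0 < α) {s : ℝ} (hs : 0 < s)
    (hγα : -α < γ) (hγ : γ < dim E) :
    Integrable (fun u : E => heatKernelBound α s u * ‖u‖ ^ (-γ)) μ := by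
  simp_rw [heatKernelBound_mul_rpow_eq hα hs]
  exact ((integrable_heatKernelBound_one_mul_rpow μ hγα hγ).comp_smul
    (inv_ne_zero (rpow_pos_of_pos hs _).ne')).const_mul _

theorem integral_heatKernelBound_mul_rpow (hα : 0 < α) {s : ℝ} (hs : 0 < s) (γ : ℝ) :
    ∫ u, heatKernelBound α s u * ‖u‖ ^ (-γ) ∂μ =
      s ^ (-(γ / α)) * ∫ v, heatKernelBound α 1 v * ‖v‖ ^ (-γ) ∂μ := by
  simp_rw [heatKernelBound_mul_rpow_eq hα hs]
  rw [integral_const_mul, Measure.integral_comp_inv_smul_of_nonneg μ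
      (fun v => heatKernelBound α 1 v * ‖v‖ ^ (-γ)) (rpow_nonneg hs.le _),
    smul_eq_mul, ← mul_assoc, ← rpow_natCast, ← rpow_mul hs.le, ← rpow_add hs]
  ring_nf

theorem integral_integral_le_of_abs_le_min_rpow [Nontrivial E] (hα : 0 < α) (hβ : α < β)
    (hγ : 0 ≤ γ) (hγd : γ < dim E) {A : ℝ} {F : E → E → ℝ}
    (hF : ∀ z w, |F z w| ≤ A * min (dist z w ^ β) 1) {s t : ℝ} (hs : 0 < s) (ht : 0 < t)
    (y : E) :
    ∫ w, ∫ z, min (s ^ (-(dim E : ℝ) / α)) (s / dist y w ^ ((dim E : ℝ) + α)) *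
        (1 + min (dist z w) (t ^ (1 / α)) / dist y w) ^ γ *
        ((|F z w| + |F w z|) / dist z w ^ ((dim E : ℝ) + α)) ∂μ ∂μ ≤
      2 ^ γ * (2 * A) * (∫ u, jumpKernelBound α β u ∂μ) *
        ((∫ v, heatKernelBound α 1 v ∂μ) +
          (∫ v, heatKernelBound α 1 v * ‖v‖ ^ (-γ) ∂μ) * t ^ (γ / α) * s ^ (-(γ / α))) := by
  set P : E → ℝ := fun u =>
    heatKernelBound α s u + t ^ (γ / α) * (heatKernelBound α s u * ‖u‖ ^ (-γ))
  have hq : Integrable (heatKernelBound (E := E) α s) μ := by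
    simpa using integrable_heatKernelBound_mul_rpow μ hα hs (γ := 0) (by linarith)
      (by exact_mod_cast finrank_pos)
  have hqγ := integrable_heatKernelBound_mul_rpow μ hα hs (by linarith) hγd
  have hP : Integrable P μ := hq.add (hqγ.const_mul _)
  have hK := integrable_jumpKernelBound μ hα hβ
  have hpt := fun w z => integrand_le_heatKernelBound_mul_jumpKernelBound (α := α) hF hγ hs.le
    (rpow_nonneg ht.le (1 / α)) y w z
  simp only [← rpow_mul ht.le, one_div_mul_eq_div] at hpt
  have hq₀ := integral_heatKernelBound_mul_rpow μ hα hs 0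
  simp only [neg_zero, rpow_zero, mul_one, zero_div] at hq₀
  calc _ ≤ ∫ w, 2 ^ γ * (2 * A) * P (w - y) * ∫ u, jumpKernelBound α β u ∂μ ∂μ := by
        refine integral_mono_of_nonneg (.of_forall fun w => integral_nonneg fun z => by positivity)
          (((hP.comp_sub_right y).const_mul _).mul_const _) (.of_forall fun w => ?_)
        calc _ ≤ ∫ z, 2 ^ γ * (2 * A) * (P (w - y) * jumpKernelBound α β (z - w)) ∂μ :=
              integral_mono_of_nonneg (.of_forall fun z => by positivity)
                (((hK.comp_sub_right w).const_mul _).const_mul _) (.of_forall (hpt w))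
          _ = _ := by
              rw [integral_const_mul, integral_const_mul, integral_sub_right_eq_self]; ring
    _ = 2 ^ γ * (2 * A) * (∫ u, jumpKernelBound α β u ∂μ) * ∫ u, P u ∂μ := by
        rw [integral_mul_const, integral_const_mul, integral_sub_right_eq_self]; ring
    _ = _ := by
        rw [integral_add hq (hqγ.const_mul _), integral_const_mul,
          integral_heatKernelBound_mul_rpow μ hα hs γ, hq₀]
        ring

end Haar

end

theorem stmt15_general (d : ℕ) (hd : 1 ≤ d) (α β γ A : ℝ) (hα : 0 < α)
    (hβ : α < β) (hγ : 0 ≤ γ) (hγα : γ < min α d) (hA : 0 < A) :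
    ∃ C : ℝ, 0 < C ∧
      ∀ F : EuclideanSpace ℝ (Fin d) → EuclideanSpace ℝ (Fin d) → ℝ,
        Measurable (Function.uncurry F) →
        (∀ z w, |F z w| ≤ A * min (dist z w ^ β) 1) →
        (∀ z, F z z = 0) →
        ∀ D : Set (EuclideanSpace ℝ (Fin d)), MeasurableSet D →
          ∀ t : ℝ, 0 < t → ∀ y ∈ D,
            (∫ s in Set.Ioo (0 : ℝ) t, ∫ w : EuclideanSpace ℝ (Fin d),
                ∫ z : EuclideanSpace ℝ (Fin d),
                  min (s ^ (-(d : ℝ) / α)) (s / (dist y w) ^ ((d : ℝ) + α)) *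
                    (1 + min (dist z w) (t ^ (1 / α)) / dist y w) ^ γ *
                      ((|F z w| + |F w z|) / dist z w ^ ((d : ℝ) + α)))
              ≤ C * A * t := by
  have hθ : γ / α < 1 := (div_lt_one hα).2 (hγα.trans_le (min_le_left _ _))
  have : Nontrivial (EuclideanSpace ℝ (Fin d)) := nontrivial_of_finrank_pos (R := ℝ) (by simpa)
  set JK := ∫ u : EuclideanSpace ℝ (Fin d), jumpKernelBound α β u
  set J₀ := ∫ v : EuclideanSpace ℝ (Fin d), heatKernelBound α 1 v
  set Jγ := ∫ v : EuclideanSpace ℝ (Fin d), heatKernelBound α 1 v * ‖v‖ ^ (-γ)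
  set C₀ := 2 ^ γ * 2 * JK * (J₀ + Jγ / (1 - γ / α))
  refine ⟨max C₀ 1, lt_max_of_lt_right one_pos, ?_⟩
  intro F _ hF _ D _ t ht y _
  have hspace := fun s (hs : s ∈ Ioo 0 t) => integral_integral_le_of_abs_le_min_rpow volume hα
    hβ hγ (by simpa using hγα.trans_le (min_le_right _ _)) hF hs.1 ht y
  simp only [finrank_euclideanSpace_fin] at hspace
  calc _ ≤ ∫ s in Ioo 0 t, 2 ^ γ * (2 * A) * JK * (J₀ + Jγ * t ^ (γ / α) * s ^ (-(γ / α))) :=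
        integral_mono_of_nonneg
          (ae_restrict_of_forall_mem measurableSet_Ioo fun s hs =>
            integral_nonneg fun w => integral_nonneg fun z => by have := hs.1; positivity)
          ((integrableOn_Ioo_const_add_mul_rpow_neg hθ ht _ _).const_mul _)
          (ae_restrict_of_forall_mem measurableSet_Ioo hspace)
    _ = C₀ * A * t := by rw [integral_const_mul, integral_Ioo_const_add_mul_rpow_neg hθ ht]; ring
    _ ≤ _ := by gcongr; exact le_max_left _ _

theorem stmt15 (d : ℕ) (hd : 1 ≤ d) (α β γ A : ℝ) (hα : 0 < α) (hα2 : α < 2)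
    (hβ : α < β) (hγ : 0 ≤ γ) (hγα : γ < min α d) (hA : 0 < A) :
    ∃ C : ℝ, 0 < C ∧
      ∀ F : EuclideanSpace ℝ (Fin d) → EuclideanSpace ℝ (Fin d) → ℝ,
        Measurable (Function.uncurry F) →
        (∀ z w, |F z w| ≤ A * min (dist z w ^ β) 1) →
        (∀ z, F z z = 0) →
        ∀ D : Set (EuclideanSpace ℝ (Fin d)), MeasurableSet D →
          ∀ t : ℝ, 0 < t → ∀ y ∈ D,
            (∫ s in Set.Ioo (0 : ℝ) t, ∫ w : EuclideanSpace ℝ (Fin d),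
                ∫ z : EuclideanSpace ℝ (Fin d),
                  min (s ^ (-(d : ℝ) / α)) (s / (dist y w) ^ ((d : ℝ) + α)) *
                    (1 + min (dist z w) (t ^ (1 / α)) / dist y w) ^ γ *
                      ((|F z w| + |F w z|) / dist z w ^ ((d : ℝ) + α)))
              ≤ C * A * t :=
  stmt15_general d hd α β γ A hα hβ hγ hγα hA
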